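/- For any given incentive profile u, if f and f̄ are both Wardrop equilibrium flows of a routing game with path-specific node costs (edge and base node costs nonnegative, continuous, nondecreasing), then the marginal costs agree on every edge and node: c_e(f_e) = c_e(f̄_e) for every edge e, and c_v(f_v) = c_v(f̄_v) for every node v. -/

import Mathlib

open Set MeasureTheory intervalIntegral

section RoutingGame

variable {E V P : Type*} [Fintype E] [Fintype V] [Fintype P] [Nonempty P]
  [DecidableEq E] [DecidableEq V]

/-- Edge flow: total flow of paths containing edge `e`. -/
noncomputable def edgeFlow (pathE : P → Finset E) (f : P → ℝ) (e : E) : ℝ :=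
  ∑ p ∈ Finset.univ.filter (fun p => e ∈ pathE p), f p

/-- Node flow: total flow of paths containing node `v`. -/
noncomputable def nodeFlow (pathV : P → Finset V) (f : P → ℝ) (v : V) : ℝ :=
  ∑ p ∈ Finset.univ.filter (fun p => v ∈ pathV p), f p

/-- Feasible flows: nonnegative, summing to one. -/
def Feasible (f : P → ℝ) : Prop := (∀ p, 0 ≤ f p) ∧ ∑ p, f p = 1

/-- Path cost with additive path-specific node incentives. -/
noncomputable def pathCost (pathE : P → Finset E) (pathV : P → Finset V)
    (ce : E → ℝ → ℝ) (cv : V → ℝ → ℝ) (u : V → P → ℝ) (f : P → ℝ) (p : P) : ℝ :=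
  (∑ e ∈ pathE p, ce e (edgeFlow pathE f e)) +
  (∑ v ∈ pathV p, (cv v (nodeFlow pathV f v) + u v p))

/-- Wardrop equilibrium: every used path has minimal cost. -/
def IsWardrop (pathE : P → Finset E) (pathV : P → Finset V)
    (ce : E → ℝ → ℝ) (cv : V → ℝ → ℝ) (u : V → P → ℝ) (f : P → ℝ) : Prop :=
  ∀ p q : P, 0 < f p →
    pathCost pathE pathV ce cv u f p ≤ pathCost pathE pathV ce cv u f q

/-- The potential function `Φ(f,u)`. -/
noncomputable def potential (pathE : P → Finset E) (pathV : P → Finset V)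
    (ce : E → ℝ → ℝ) (cv : V → ℝ → ℝ) (u : V → P → ℝ) (f : P → ℝ) : ℝ :=
  (∑ e, ∫ s in (0:ℝ)..(edgeFlow pathE f e), ce e s) +
  (∑ v, ∫ s in (0:ℝ)..(nodeFlow pathV f v), cv v s) +
  (∑ p, f p * ∑ v ∈ pathV p, u v p)

/-- Social cost. -/
noncomputable def socialCost (pathE : P → Finset E) (pathV : P → Finset V)
    (ce : E → ℝ → ℝ) (cv : V → ℝ → ℝ) (u : V → P → ℝ) (f : P → ℝ) : ℝ :=
  ∑ p, f p * pathCost pathE pathV ce cv u f p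

end RoutingGame

/-! The incentives `u` do not depend on the flow, so they cancel in the difference of the path
costs at two flows. Pairing the variational inequalities of the two equilibria therefore gives
`∑ₑ (cₑ(fₑ) - cₑ(f̄ₑ)) (fₑ - f̄ₑ) + ∑ᵥ (cᵥ(fᵥ) - cᵥ(f̄ᵥ)) (fᵥ - f̄ᵥ) ≤ 0`, while monotonicity makes
every term nonnegative; so every term vanishes, and a vanishing term forces equal costs. -/

section

variable {E V P : Type*} [Fintype P] [DecidableEq E] [DecidableEq V]

lemma Feasible.sum_filter_mem_Icc {A : Type*} [DecidableEq A] {f : P → ℝ} (hf : Feasible f)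
    (pa : P → Finset A) (a : A) :
    ∑ p ∈ Finset.univ.filter (fun p => a ∈ pa p), f p ∈ Set.Icc (0:ℝ) 1 :=
  ⟨Finset.sum_nonneg fun p _ => hf.1 p,
    hf.2 ▸ Finset.sum_le_sum_of_subset_of_nonneg (Finset.filter_subset _ _) fun p _ _ => hf.1 p⟩

lemma Feasible.edgeFlow_mem_Icc {f : P → ℝ} (hf : Feasible f) (pathE : P → Finset E) (e : E) :
    edgeFlow pathE f e ∈ Set.Icc (0:ℝ) 1 :=
  hf.sum_filter_mem_Icc pathE e

lemma Feasible.nodeFlow_mem_Icc {f : P → ℝ} (hf : Feasible f) (pathV : P → Finset V) (v : V) :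
    nodeFlow pathV f v ∈ Set.Icc (0:ℝ) 1 :=
  hf.sum_filter_mem_Icc pathV v

lemma sum_mul_sum_mem_comm {A : Type*} [Fintype A] [DecidableEq A]
    (pa : P → Finset A) (g : P → ℝ) (c : A → ℝ) :
    ∑ p, g p * ∑ a ∈ pa p, c a = ∑ a, c a * ∑ p ∈ Finset.univ.filter (fun p => a ∈ pa p), g p := by
  simp_rw [Finset.mul_sum, Finset.sum_filter]
  rw [Finset.sum_comm]
  refine Finset.sum_congr rfl fun p _ => ?_
  simp [mul_comm]

lemma Feasible.sum_mul_le_sum_mul {c f g : P → ℝ} (hf : Feasible f) (hg : Feasible g)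
    (hmin : ∀ p q, 0 < f p → c p ≤ c q) :
    ∑ p, f p * c p ≤ ∑ p, g p * c p := by
  obtain ⟨p₀, -, hp₀⟩ : ∃ p ∈ Finset.univ, (0:ℝ) < f p :=
    Finset.exists_lt_of_sum_lt (by simp [hf.2])
  have hf_sum : ∑ p, f p * c p = c p₀ := by
    have hsupp : ∀ p, f p * c p = f p * c p₀ := fun p => by
      rcases (hf.1 p).lt_or_eq with hp | hp
      · rw [le_antisymm (hmin p p₀ hp) (hmin p₀ p hp₀)]
      · rw [← hp, zero_mul, zero_mul]
    rw [Finset.sum_congr rfl fun p _ => hsupp p, ← Finset.sum_mul, hf.2, one_mul]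
  calc ∑ p, f p * c p = ∑ p, g p * c p₀ := by rw [hf_sum, ← Finset.sum_mul, hg.2, one_mul]
    _ ≤ ∑ p, g p * c p :=
      Finset.sum_le_sum fun p _ => mul_le_mul_of_nonneg_left (hmin p₀ p hp₀) (hg.1 p)

lemma IsWardrop.sum_sub_mul_pathCost_nonpos {pathE : P → Finset E} {pathV : P → Finset V}
    {ce : E → ℝ → ℝ} {cv : V → ℝ → ℝ} {u : V → P → ℝ} {f g : P → ℝ}
    (heq : IsWardrop pathE pathV ce cv u f) (hf : Feasible f) (hg : Feasible g) :
    ∑ p, (f p - g p) * pathCost pathE pathV ce cv u f p ≤ 0 := by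
  simp_rw [sub_mul, Finset.sum_sub_distrib]
  exact sub_nonpos.2 (hf.sum_mul_le_sum_mul hg heq)

lemma IsWardrop.sum_sub_mul_pathCost_sub_nonpos {pathE : P → Finset E} {pathV : P → Finset V}
    {ce : E → ℝ → ℝ} {cv : V → ℝ → ℝ} {u : V → P → ℝ} {f g : P → ℝ}
    (heqf : IsWardrop pathE pathV ce cv u f) (heqg : IsWardrop pathE pathV ce cv u g)
    (hf : Feasible f) (hg : Feasible g) :
    ∑ p, (f p - g p) * (pathCost pathE pathV ce cv u f p - pathCost pathE pathV ce cv u g p)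
      ≤ 0 := by
  have hsplit : ∑ p, (f p - g p) *
      (pathCost pathE pathV ce cv u f p - pathCost pathE pathV ce cv u g p) =
        ∑ p, (f p - g p) * pathCost pathE pathV ce cv u f p +
          ∑ p, (g p - f p) * pathCost pathE pathV ce cv u g p := by
    rw [← Finset.sum_add_distrib]
    exact Finset.sum_congr rfl fun p _ => by ring
  rw [hsplit]
  exact add_nonpos (heqf.sum_sub_mul_pathCost_nonpos hf hg) (heqg.sum_sub_mul_pathCost_nonpos hg hf)

lemma sum_sub_mul_pathCost_sub [Fintype E] [Fintype V]
    (pathE : P → Finset E) (pathV : P → Finset V)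
    (ce : E → ℝ → ℝ) (cv : V → ℝ → ℝ) (u : V → P → ℝ) (f g : P → ℝ) :
    ∑ p, (f p - g p) * (pathCost pathE pathV ce cv u f p - pathCost pathE pathV ce cv u g p) =
      (∑ e, (ce e (edgeFlow pathE f e) - ce e (edgeFlow pathE g e)) *
          (edgeFlow pathE f e - edgeFlow pathE g e)) +
        ∑ v, (cv v (nodeFlow pathV f v) - cv v (nodeFlow pathV g v)) *
          (nodeFlow pathV f v - nodeFlow pathV g v) := by
  have hcost : ∀ p, pathCost pathE pathV ce cv u f p - pathCost pathE pathV ce cv u g p =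
      (∑ e ∈ pathE p, (ce e (edgeFlow pathE f e) - ce e (edgeFlow pathE g e))) +
        ∑ v ∈ pathV p, (cv v (nodeFlow pathV f v) - cv v (nodeFlow pathV g v)) := fun p => by
    simp only [pathCost, Finset.sum_add_distrib, Finset.sum_sub_distrib]
    ring
  simp_rw [hcost, mul_add, Finset.sum_add_distrib, sum_mul_sum_mem_comm,
    Finset.sum_sub_distrib, edgeFlow, nodeFlow]

lemma apply_eq_of_sum_sub_mul_sub_nonpos {ι : Type*} [Fintype ι] {s : Set ℝ}
    {c : ι → ℝ → ℝ} {x y : ι → ℝ} (hc : ∀ i, MonotoneOn (c i) s)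
    (hx : ∀ i, x i ∈ s) (hy : ∀ i, y i ∈ s)
    (hsum : ∑ i, (c i (x i) - c i (y i)) * (x i - y i) ≤ 0) (i : ι) :
    c i (x i) = c i (y i) := by
  have hterm : ∀ j, 0 ≤ (c j (x j) - c j (y j)) * (x j - y j) := fun j =>
    (monovaryOn_id_iff.2 (hc j)).sub_mul_sub_nonneg (hy j) (hx j)
  have hzero := (Finset.sum_eq_zero_iff_of_nonneg fun j _ => hterm j).1
    (hsum.antisymm (Finset.sum_nonneg fun j _ => hterm j)) i (Finset.mem_univ i)
  rcases mul_eq_zero.1 hzero with h | h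
  · exact sub_eq_zero.1 h
  · rw [sub_eq_zero.1 h]

lemma sum_sub_mul_sub_nonneg {ι : Type*} [Fintype ι] {s : Set ℝ}
    {c : ι → ℝ → ℝ} {x y : ι → ℝ} (hc : ∀ i, MonotoneOn (c i) s)
    (hx : ∀ i, x i ∈ s) (hy : ∀ i, y i ∈ s) :
    0 ≤ ∑ i, (c i (x i) - c i (y i)) * (x i - y i) :=
  Finset.sum_nonneg fun i _ => (monovaryOn_id_iff.2 (hc i)).sub_mul_sub_nonneg (hy i) (hx i)

end

section RoutingGame

variable {E V P : Type*} [Fintype E] [Fintype V] [Fintype P] [Nonempty P]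
  [DecidableEq E] [DecidableEq V]

theorem wardrop_marginal_costs_agree_general
    (pathE : P → Finset E) (pathV : P → Finset V)
    (ce : E → ℝ → ℝ) (cv : V → ℝ → ℝ) (u : V → P → ℝ)
    (hce_mono : ∀ e, MonotoneOn (ce e) (Set.Icc (0:ℝ) 1))
    (hcv_mono : ∀ v, MonotoneOn (cv v) (Set.Icc (0:ℝ) 1))
    (f fbar : P → ℝ) (hf : Feasible f) (hfbar : Feasible fbar)
    (heqf : IsWardrop pathE pathV ce cv u f)
    (heqfbar : IsWardrop pathE pathV ce cv u fbar) :
    (∀ e : E, ce e (edgeFlow pathE f e) = ce e (edgeFlow pathE fbar e)) ∧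
    (∀ v : V, cv v (nodeFlow pathV f v) = cv v (nodeFlow pathV fbar v)) := by
  have hpaired := heqf.sum_sub_mul_pathCost_sub_nonpos heqfbar hf hfbar
  rw [sum_sub_mul_pathCost_sub] at hpaired
  have hE := sum_sub_mul_sub_nonneg hce_mono (hf.edgeFlow_mem_Icc pathE)
    (hfbar.edgeFlow_mem_Icc pathE)
  have hV := sum_sub_mul_sub_nonneg hcv_mono (hf.nodeFlow_mem_Icc pathV)
    (hfbar.nodeFlow_mem_Icc pathV)
  exact ⟨apply_eq_of_sum_sub_mul_sub_nonpos hce_mono (hf.edgeFlow_mem_Icc pathE)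
      (hfbar.edgeFlow_mem_Icc pathE) (by linarith),
    apply_eq_of_sum_sub_mul_sub_nonpos hcv_mono (hf.nodeFlow_mem_Icc pathV)
      (hfbar.nodeFlow_mem_Icc pathV) (by linarith)⟩

/-- Any two Wardrop equilibrium flows induce the same marginal costs on
every edge and node. -/
theorem wardrop_marginal_costs_agree
    (pathE : P → Finset E) (pathV : P → Finset V)
    (ce : E → ℝ → ℝ) (cv : V → ℝ → ℝ) (u : V → P → ℝ)
    (hce_nn : ∀ e, ∀ x ∈ Set.Icc (0:ℝ) 1, 0 ≤ ce e x)
    (hce_cont : ∀ e, ContinuousOn (ce e) (Set.Icc (0:ℝ) 1))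
    (hce_mono : ∀ e, MonotoneOn (ce e) (Set.Icc (0:ℝ) 1))
    (hcv_nn : ∀ v, ∀ x ∈ Set.Icc (0:ℝ) 1, 0 ≤ cv v x)
    (hcv_cont : ∀ v, ContinuousOn (cv v) (Set.Icc (0:ℝ) 1))
    (hcv_mono : ∀ v, MonotoneOn (cv v) (Set.Icc (0:ℝ) 1))
    (f fbar : P → ℝ) (hf : Feasible f) (hfbar : Feasible fbar)
    (heqf : IsWardrop pathE pathV ce cv u f)
    (heqfbar : IsWardrop pathE pathV ce cv u fbar) :
    (∀ e : E, ce e (edgeFlow pathE f e) = ce e (edgeFlow pathE fbar e)) ∧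
    (∀ v : V, cv v (nodeFlow pathV f v) = cv v (nodeFlow pathV fbar v)) :=
  wardrop_marginal_costs_agree_general pathE pathV ce cv u hce_mono hcv_mono f fbar hf hfbar heqf
    heqfbar

end RoutingGame
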